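/- For each m ≥ 1 there is a constant C > 0 such that for every i with 0 ≤ i ≤ m−1 and every integer k with |k| ≥ 2, |s_i^k|_{G_m} ≤ C·log₂|k|. -/
import Mathlib


/-- Iterated exponential: `E 0 n = n`, `E (m+1) n = 2 ^ E m n`. -/
def E : ℕ → ℕ → ℕ
  | 0, n => n
  | m + 1, n => 2 ^ E m n

/-- `Preceq f g` iff there is `C > 0` with `f n ≤ C * g (C*n + C) + C*n + C` for all `n`. -/
def Preceq (f g : ℕ → ℕ) : Prop :=
  ∃ C : ℕ, 0 < C ∧ ∀ n : ℕ, f n ≤ C * g (C * n + C) + C * n + C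

/-- Defining relations of the `m`-th iterated Baumslag–Solitar group:
`s_{i+1} s_i s_{i+1}⁻¹ = s_i²` for `i = 0, …, m-1`. -/
def bsRels (m : ℕ) : Set (FreeGroup (Fin (m + 1))) :=
  Set.range (fun i : Fin m =>
    FreeGroup.of i.succ * FreeGroup.of i.castSucc * (FreeGroup.of i.succ)⁻¹ *
      (FreeGroup.of i.castSucc ^ 2)⁻¹)

/-- The `m`-th iterated Baumslag–Solitar group. -/
abbrev IterBS (m : ℕ) := PresentedGroup (bsRels m)

/-- The generator `s_i` of `IterBS m`. -/
def sg {m : ℕ} (i : Fin (m + 1)) : IterBS m := PresentedGroup.of i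

/-- The element of `IterBS m` represented by a word on the generators and their inverses. -/
def evalWord {m : ℕ} (w : List (Fin (m + 1) × Bool)) : IterBS m :=
  (w.map (fun p => if p.2 then sg p.1 else (sg p.1)⁻¹)).prod

/-- Word length of `g ∈ IterBS m` with respect to the generators `s_0, …, s_m`. -/
noncomputable def wl {m : ℕ} (g : IterBS m) : ℕ :=
  sInf { n | ∃ w : List (Fin (m + 1) × Bool), w.length = n ∧ evalWord w = g }

/-- The minimal word length of a conjugator taking `u` to `v`. -/
noncomputable def cLen {m : ℕ} (u v : IterBS m) : ℕ :=
  sInf { n | ∃ γ : IterBS m, γ * u * γ⁻¹ = v ∧ wl γ = n }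

/-- The conjugator length function of `IterBS m`. -/
noncomputable def CLGm (m : ℕ) (n : ℕ) : ℕ :=
  sSup { c | ∃ u v : List (Fin (m + 1) × Bool),
    u.length + v.length ≤ n ∧
    (∃ γ : IterBS m, γ * evalWord u * γ⁻¹ = evalWord v) ∧
    c = cLen (evalWord u) (evalWord v) }

/- ### Auxiliary lemmas -/

lemma evalWord_append {m : ℕ} (u v : List (Fin (m + 1) × Bool)) :
    evalWord (u ++ v) = evalWord u * evalWord v := by
  simp [evalWord]

lemma bs_rel {m : ℕ} (j : Fin m) :
    sg j.succ * sg j.castSucc * (sg j.succ)⁻¹ = (sg (m := m) j.castSucc) ^ 2 := by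
  have h : PresentedGroup.mk (bsRels m)
      (FreeGroup.of j.succ * FreeGroup.of j.castSucc * (FreeGroup.of j.succ)⁻¹ *
        (FreeGroup.of j.castSucc ^ 2)⁻¹) = 1 := by
    apply (QuotientGroup.eq_one_iff _).mpr
    exact Subgroup.subset_normalClosure ⟨j, rfl⟩
  have h2 : sg (m := m) j.succ * sg j.castSucc * (sg j.succ)⁻¹ *
      ((sg j.castSucc) ^ 2)⁻¹ = 1 := by
    simpa [sg, PresentedGroup.of, map_mul, map_inv, map_pow] using h
  exact mul_inv_eq_one.mp h2

lemma conj_pow_aux {G : Type*} [Group G] (g x : G) (a : ℕ) :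
    g * x ^ a * g⁻¹ = (g * x * g⁻¹) ^ a := by
  induction a with
  | zero => simp
  | succ a ih => rw [pow_succ, pow_succ, ← ih]; group

lemma bs_rel_pow {m : ℕ} (j : Fin m) (a : ℕ) :
    sg (m := m) j.succ * (sg j.castSucc) ^ a * (sg j.succ)⁻¹ =
      (sg j.castSucc) ^ (2 * a) := by
  have := bs_rel j
  calc sg (m := m) j.succ * (sg j.castSucc) ^ a * (sg j.succ)⁻¹
      = (sg j.succ * sg j.castSucc * (sg j.succ)⁻¹) ^ a := conj_pow_aux _ _ a
    _ = ((sg j.castSucc) ^ 2) ^ a := by rw [this]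
    _ = (sg j.castSucc) ^ (2 * a) := by rw [← pow_mul]

/-- Word for `s_{j.castSucc} ^ n` of length `O(log n)`. -/
def W {m : ℕ} (j : Fin m) : ℕ → List (Fin (m + 1) × Bool)
  | 0 => []
  | 1 => [(j.castSucc, true)]
  | (n + 2) =>
      (j.succ, true) :: W j ((n + 2) / 2) ++ (j.succ, false) ::
        (if (n + 2) % 2 = 1 then [(j.castSucc, true)] else [])
  decreasing_by exact Nat.div_lt_self (by omega) (by omega)

lemma evalWord_W {m : ℕ} (j : Fin m) (n : ℕ) :
    evalWord (W j n) = (sg j.castSucc) ^ n := by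
  induction n using Nat.strong_induction_on with
  | _ n ih =>
    match n with
    | 0 => simp [W, evalWord]
    | 1 => simp [W, evalWord]
    | (n + 2) =>
      have hq : (n + 2) / 2 < n + 2 := Nat.div_lt_self (by omega) (by omega)
      rw [W]
      rcases Nat.even_or_odd (n + 2) with he | ho
      · have h2 : (n + 2) % 2 = 0 := Nat.even_iff.mp he
        have key : n + 2 = 2 * ((n + 2) / 2) := by omega
        rw [h2, if_neg (by norm_num)]
        rw [show ((j.succ, true) :: W j ((n + 2) / 2) ++ (j.succ, false) ::
              ([] : List (Fin (m + 1) × Bool)))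
            = [(j.succ, true)] ++ W j ((n + 2) / 2) ++ [(j.succ, false)] by simp]
        rw [evalWord_append, evalWord_append, ih _ hq]
        have : evalWord (m := m) [(j.succ, true)] = sg j.succ := by simp [evalWord]
        rw [this]
        have : evalWord (m := m) [(j.succ, false)] = (sg j.succ)⁻¹ := by simp [evalWord]
        rw [this, bs_rel_pow, ← key]
      · have h2 : (n + 2) % 2 = 1 := Nat.odd_iff.mp ho
        have key : n + 2 = 2 * ((n + 2) / 2) + 1 := by omega
        rw [h2, if_pos rfl]
        rw [show ((j.succ, true) :: W j ((n + 2) / 2) ++ (j.succ, false) ::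
              [(j.castSucc, true)])
            = [(j.succ, true)] ++ W j ((n + 2) / 2) ++ [(j.succ, false)] ++
              [(j.castSucc, true)] by simp]
        rw [evalWord_append, evalWord_append, evalWord_append, ih _ hq]
        have h1 : evalWord (m := m) [(j.succ, true)] = sg j.succ := by simp [evalWord]
        have h1' : evalWord (m := m) [(j.succ, false)] = (sg j.succ)⁻¹ := by simp [evalWord]
        have h1'' : evalWord (m := m) [(j.castSucc, true)] = sg j.castSucc := by
          simp [evalWord]
        rw [h1, h1', h1'', bs_rel_pow]
        rw [← pow_succ]
        congr 1
        omega

lemma length_W {m : ℕ} (j : Fin m) (n : ℕ) (hn : 1 ≤ n) :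
    (W j n).length ≤ 3 * Nat.log 2 n + 1 := by
  induction n using Nat.strong_induction_on with
  | _ n ih =>
    match n with
    | 1 => simp [W]
    | (n + 2) =>
      have hq : (n + 2) / 2 < n + 2 := Nat.div_lt_self (by omega) (by omega)
      have hq1 : 1 ≤ (n + 2) / 2 := by omega
      have hlog : Nat.log 2 (n + 2) = Nat.log 2 ((n + 2) / 2) + 1 := by
        rw [Nat.log_eq_iff] <;> try omega
        constructor
        · calc 2 ^ (Nat.log 2 ((n + 2) / 2) + 1) = 2 ^ Nat.log 2 ((n + 2) / 2) * 2 := by ring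
          _ ≤ (n + 2) / 2 * 2 := by
              have := Nat.pow_log_le_self 2 (show (n+2)/2 ≠ 0 by omega)
              omega
          _ ≤ n + 2 := by omega
        · have := Nat.lt_pow_succ_log_self (show 1 < 2 by norm_num) ((n + 2) / 2)
          calc n + 2 < ((n + 2) / 2 + 1) * 2 := by omega
          _ ≤ 2 ^ (Nat.log 2 ((n + 2) / 2) + 1) * 2 := by
              have : (n + 2) / 2 + 1 ≤ 2 ^ (Nat.log 2 ((n + 2) / 2) + 1) := this
              omega
          _ = 2 ^ (Nat.log 2 ((n + 2) / 2) + 1 + 1) := by ring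
      rw [W]
      have hlen : ((j.succ, true) :: W j ((n + 2) / 2) ++ (j.succ, false) ::
          (if (n + 2) % 2 = 1 then [(j.castSucc, true)] else [])).length
          ≤ (W j ((n + 2) / 2)).length + 3 := by
        simp only [List.length_append, List.length_cons]
        split <;> simp <;> omega
      have := ih _ hq hq1
      omega

def invW {m : ℕ} (w : List (Fin (m + 1) × Bool)) : List (Fin (m + 1) × Bool) :=
  (w.map (fun p => (p.1, !p.2))).reverse

lemma evalWord_invW {m : ℕ} (w : List (Fin (m + 1) × Bool)) :
    evalWord (invW w) = (evalWord w)⁻¹ := by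
  induction w with
  | nil => simp [invW, evalWord]
  | cons p w ih =>
    have : invW (p :: w) = invW w ++ [(p.1, !p.2)] := by simp [invW]
    rw [this, evalWord_append, ih]
    have hsingle : evalWord (m := m) [(p.1, !p.2)] =
        (if p.2 then sg p.1 else (sg p.1)⁻¹)⁻¹ := by
      cases p.2 <;> simp [evalWord]
    rw [hsingle]
    have : evalWord (p :: w) = (if p.2 then sg p.1 else (sg p.1)⁻¹) * evalWord w := by
      simp [evalWord]
    rw [this, mul_inv_rev]

lemma length_invW {m : ℕ} (w : List (Fin (m + 1) × Bool)) :
    (invW w).length = w.length := by simp [invW]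

lemma wl_le {m : ℕ} (g : IterBS m) (w : List (Fin (m + 1) × Bool))
    (h : evalWord w = g) : wl g ≤ w.length :=
  Nat.sInf_le ⟨w, rfl, h⟩

/-- For each `m ≥ 1` there is `C > 0` with `|s_i^k|_{G_m} ≤ C·log₂|k|` for all
`0 ≤ i ≤ m - 1` and all integers `k` with `|k| ≥ 2`. -/
theorem logarithmic_shrinking (m : ℕ) (hm : 1 ≤ m) :
    ∃ C : ℝ, 0 < C ∧ ∀ i : Fin (m + 1), (i : ℕ) < m → ∀ k : ℤ, 2 ≤ |k| →
      (wl (sg i ^ k) : ℝ) ≤ C * Real.logb 2 (|k| : ℝ) := by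
  refine ⟨4, by norm_num, fun i hi k hk => ?_⟩
  set j : Fin m := ⟨(i : ℕ), hi⟩ with hj
  have hcast : j.castSucc = i := by
    ext; simp [hj]
  set n : ℕ := k.natAbs with hn
  have hn2 : 2 ≤ n := by
    have : (2 : ℤ) ≤ (k.natAbs : ℤ) := by rwa [Int.abs_eq_natAbs] at hk
    exact_mod_cast this
  -- word length bound in ℕ
  have hnat : wl (sg i ^ k) ≤ 3 * Nat.log 2 n + 1 := by
    rcases Int.natAbs_eq k with hpos | hneg
    · have hpow : sg (m := m) i ^ k = sg j.castSucc ^ n := by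
        rw [hcast, hpos, zpow_natCast]
      rw [hpow, ← evalWord_W j n]
      exact le_trans (wl_le _ _ rfl) (length_W j n (by omega))
    · have hpow : sg (m := m) i ^ k = (sg j.castSucc ^ n)⁻¹ := by
        rw [hcast, hneg, zpow_neg, zpow_natCast]
      rw [hpow, ← evalWord_W j n, ← evalWord_invW]
      calc wl (evalWord (invW (W j n))) ≤ (invW (W j n)).length := wl_le _ _ rfl
        _ = (W j n).length := length_invW _
        _ ≤ 3 * Nat.log 2 n + 1 := length_W j n (by omega)
  have hlog1 : 1 ≤ Nat.log 2 n := Nat.le_log_of_pow_le (by norm_num) (by omega)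
  have hnat4 : wl (sg i ^ k) ≤ 4 * Nat.log 2 n := by omega
  have hR : (wl (sg i ^ k) : ℝ) ≤ 4 * (Nat.log 2 n : ℝ) := by exact_mod_cast hnat4
  refine hR.trans ?_
  have hlogb : (Nat.log 2 n : ℝ) ≤ Real.logb 2 (n : ℝ) := Real.natLog_le_logb n 2
  have habs : |(k : ℝ)| = (n : ℝ) := by
    rw [hn, Nat.cast_natAbs, Int.cast_abs]
  rw [habs]
  nlinarith [hlogb]
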